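/- For every integer n ≥ 8 with n ≠ 11, Right wins the Forbidden Leaf Variant of the Mixed Deletion Game on the path P_n regardless of which player moves first; i.e., the game value of P_n is strictly negative. -/

import Mathlib

universe u

namespace SetTheory

/-- Re-creation of Mathlib's (Dec 2024) `SetTheory.PGame`, removed from current Mathlib. -/
inductive PGame : Type (u + 1)
  | mk : ∀ α β : Type u, (α → PGame) → (β → PGame) → PGame

namespace PGame

/-- `x` is an immediate option of `y`. -/
inductive IsOption : PGame.{u} → PGame.{u} → Prop
  | moveLeft (xl xr : Type u) (xL : xl → PGame) (xR : xr → PGame) (i : xl) :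
      IsOption (xL i) (mk xl xr xL xR)
  | moveRight (xl xr : Type u) (xL : xl → PGame) (xR : xr → PGame) (j : xr) :
      IsOption (xR j) (mk xl xr xL xR)

theorem wf_isOption : WellFounded IsOption.{u} :=
  ⟨fun x => by
    induction x with
    | mk l r L R ihL ihR =>
      constructor
      intro y h
      cases h with
      | moveLeft => exact ihL _
      | moveRight => exact ihR _⟩

instance : WellFoundedRelation PGame.{u} := ⟨IsOption, wf_isOption⟩

/-- Simultaneous definition of `≤` (first component) and `⧏` (second component). -/
def leLF : PGame.{u} → PGame.{u} → Prop × Prop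
  | mk xl xr xL xR, mk yl yr yL yR =>
    ((∀ i, (leLF (xL i) (mk yl yr yL yR)).2) ∧ ∀ j, (leLF (mk xl xr xL xR) (yR j)).2,
      (∃ i, (leLF (mk xl xr xL xR) (yL i)).1) ∨ ∃ j, (leLF (xR j) (mk yl yr yL yR)).1)
termination_by x y => (x, y)
decreasing_by
  · exact Prod.Lex.left _ _ (IsOption.moveLeft _ _ _ _ _)
  · exact Prod.Lex.right _ (IsOption.moveRight _ _ _ _ _)
  · exact Prod.Lex.right _ (IsOption.moveLeft _ _ _ _ _)
  · exact Prod.Lex.left _ _ (IsOption.moveRight _ _ _ _ _)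

instance : LE PGame.{u} := ⟨fun x y => (leLF x y).1⟩

/-- The less or fuzzy relation: `x ⧏ y` iff `¬ y ≤ x`. -/
def LF (x y : PGame.{u}) : Prop := ¬y ≤ x

instance : LT PGame.{u} := ⟨fun x y => x ≤ y ∧ LF x y⟩

instance : Zero PGame.{u} := ⟨⟨PEmpty, PEmpty, PEmpty.elim, PEmpty.elim⟩⟩

instance : One PGame.{u} := ⟨⟨PUnit, PEmpty, fun _ => 0, PEmpty.elim⟩⟩

/-- Negation of a pre-game: swap the roles of the players. -/
def neg : PGame.{u} → PGame.{u}
  | ⟨l, r, L, R⟩ => ⟨r, l, fun i => neg (R i), fun i => neg (L i)⟩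

instance : Neg PGame.{u} := ⟨neg⟩

/-- Disjunctive sum of pre-games. -/
def add : PGame.{u} → PGame.{u} → PGame.{u}
  | mk xl xr xL xR, mk yl yr yL yR =>
    mk (xl ⊕ yl) (xr ⊕ yr)
      (Sum.elim (fun i => add (xL i) (mk yl yr yL yR)) (fun i => add (mk xl xr xL xR) (yL i)))
      (Sum.elim (fun j => add (xR j) (mk yl yr yL yR)) (fun j => add (mk xl xr xL xR) (yR j)))
termination_by x y => (x, y)
decreasing_by
  · exact Prod.Lex.left _ _ (IsOption.moveLeft _ _ _ _ _)
  · exact Prod.Lex.right _ (IsOption.moveLeft _ _ _ _ _)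
  · exact Prod.Lex.left _ _ (IsOption.moveRight _ _ _ _ _)
  · exact Prod.Lex.right _ (IsOption.moveRight _ _ _ _ _)

instance : Add PGame.{u} := ⟨add⟩

/-- The game `star = {0 | 0}`. -/
def star : PGame.{u} := ⟨PUnit, PUnit, fun _ => 0, fun _ => 0⟩

/-- The nim heap `*n` (for a natural number `n`): both players may move to `*m` for `m < n`. -/
def nim (n : ℕ) : PGame.{u} :=
  ⟨ULift (Fin n), ULift (Fin n), fun i => nim i.down.val, fun i => nim i.down.val⟩
termination_by n
decreasing_by
  · exact i.down.isLt
  · exact i.down.isLt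

end PGame

end SetTheory

infixl:50 " ⧏ " => SetTheory.PGame.LF

open SetTheory PGame

namespace MixedDeletion

/-- The degree of a vertex `v` with respect to an edge set `E`. -/
def deg (E : Finset (Sym2 ℕ)) (v : ℕ) : ℕ := (E.filter (fun e => v ∈ e)).card

/-- The graph position with vertex set `V` and edge set `E` has no isolated vertex. -/
def NoIsol (V : Finset ℕ) (E : Finset (Sym2 ℕ)) : Prop := ∀ v ∈ V, 0 < deg E v

/-- Result of Left deleting the vertex `v`: remove `v` and all incident edges. -/
def delV (V : Finset ℕ) (E : Finset (Sym2 ℕ)) (v : ℕ) : Finset ℕ × Finset (Sym2 ℕ) :=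
  (V.erase v, E.filter (fun e => v ∉ e))

/-- Left may legally delete vertex `v` under the base (Classic) rules:
`v` is a vertex and the deletion creates no isolated vertex. -/
def LeftOK (V : Finset ℕ) (E : Finset (Sym2 ℕ)) (v : ℕ) : Prop :=
  v ∈ V ∧ NoIsol (V.erase v) (E.filter (fun e => v ∉ e))

/-- Right may legally delete edge `e` under the base (Classic) rules:
`e` is an edge and the deletion creates no isolated vertex. -/
def RightOK (V : Finset ℕ) (E : Finset (Sym2 ℕ)) (e : Sym2 ℕ) : Prop :=
  e ∈ E ∧ NoIsol V (E.erase e)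

/-- The Classic Variant of the Mixed Deletion Game, as a partizan game:
Left deletes a vertex (and incident edges), Right deletes an edge,
and no move may create an isolated vertex. -/
def classicG : Finset ℕ → Finset (Sym2 ℕ) → PGame
  | V, E =>
    PGame.mk {v : ℕ // LeftOK V E v} {e : Sym2 ℕ // RightOK V E e}
      (fun x => classicG (V.erase x.val) (E.filter (fun e => x.val ∉ e)))
      (fun x => classicG V (E.erase x.val))
  termination_by V E => V.card + E.card
  decreasing_by
  · have h1 : (V.erase x.val).card < V.card := Finset.card_erase_lt_of_mem x.2.1
    have h2 : (E.filter (fun e => x.val ∉ e)).card ≤ E.card := Finset.card_filter_le _ _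
    omega
  · have h1 : (E.erase x.val).card < E.card := Finset.card_erase_lt_of_mem x.2.1
    omega

/-- The Forbidden Leaf Variant: as the Classic Variant, but Left may not
delete leaf vertices (vertices of degree one). -/
def flG : Finset ℕ → Finset (Sym2 ℕ) → PGame
  | V, E =>
    PGame.mk {v : ℕ // LeftOK V E v ∧ deg E v ≠ 1} {e : Sym2 ℕ // RightOK V E e}
      (fun x => flG (V.erase x.val) (E.filter (fun e => x.val ∉ e)))
      (fun x => flG V (E.erase x.val))
  termination_by V E => V.card + E.card
  decreasing_by
  · have h1 : (V.erase x.val).card < V.card := Finset.card_erase_lt_of_mem x.2.1.1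
    have h2 : (E.filter (fun e => x.val ∉ e)).card ≤ E.card := Finset.card_filter_le _ _
    omega
  · have h1 : (E.erase x.val).card < E.card := Finset.card_erase_lt_of_mem x.2.1
    omega

/-- The Mutual Failures Variant: as the Classic Variant, but in any graph
position a player has a legal move if and only if the opponent does; i.e. a
base-rules move is legal only if the opponent also has a base-rules move. -/
def mfG : Finset ℕ → Finset (Sym2 ℕ) → PGame
  | V, E =>
    PGame.mk {v : ℕ // LeftOK V E v ∧ ∃ e, RightOK V E e}
      {e : Sym2 ℕ // RightOK V E e ∧ ∃ v, LeftOK V E v}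
      (fun x => mfG (V.erase x.val) (E.filter (fun e => x.val ∉ e)))
      (fun x => mfG V (E.erase x.val))
  termination_by V E => V.card + E.card
  decreasing_by
  · have h1 : (V.erase x.val).card < V.card := Finset.card_erase_lt_of_mem x.2.1.1
    have h2 : (E.filter (fun e => x.val ∉ e)).card ≤ E.card := Finset.card_filter_le _ _
    omega
  · have h1 : (E.erase x.val).card < E.card := Finset.card_erase_lt_of_mem x.2.1.1
    omega

/-- Edge set of the path graph on vertices `0, 1, …, n-1`. -/
def pathE (n : ℕ) : Finset (Sym2 ℕ) := (Finset.range (n - 1)).image (fun i => s(i, i + 1))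

/-- Edge set of the cycle graph on vertices `0, 1, …, n-1`. -/
def cycleE (n : ℕ) : Finset (Sym2 ℕ) := (Finset.range n).image (fun i => s(i, (i + 1) % n))

/-- Edge set of the complete graph on vertices `0, 1, …, n-1`. -/
def completeE (n : ℕ) : Finset (Sym2 ℕ) := (Finset.range n).sym2.filter (fun e => ¬ e.IsDiag)

/-- The path position `P_n` in the Classic Variant. -/
def classicPath (n : ℕ) : PGame := classicG (Finset.range n) (pathE n)

/-- The cycle position `C_n` in the Classic Variant. -/
def classicCycle (n : ℕ) : PGame := classicG (Finset.range n) (cycleE n)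

/-- The complete graph position `K_n` in the Classic Variant. -/
def classicComplete (n : ℕ) : PGame := classicG (Finset.range n) (completeE n)

/-- The path position `P_n` in the Forbidden Leaf Variant. -/
def flPath (n : ℕ) : PGame := flG (Finset.range n) (pathE n)

/-- The cycle position `C_n` in the Forbidden Leaf Variant. -/
def flCycle (n : ℕ) : PGame := flG (Finset.range n) (cycleE n)

/-- The complete graph position `K_n` in the Forbidden Leaf Variant. -/
def flComplete (n : ℕ) : PGame := flG (Finset.range n) (completeE n)

/-- The path position `P_n` in the Mutual Failures Variant. -/
def mfPath (n : ℕ) : PGame := mfG (Finset.range n) (pathE n)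

/-- The cycle position `C_n` in the Mutual Failures Variant. -/
def mfCycle (n : ℕ) : PGame := mfG (Finset.range n) (cycleE n)

/-- The complete graph position `K_n` in the Mutual Failures Variant. -/
def mfComplete (n : ℕ) : PGame := mfG (Finset.range n) (completeE n)

/-- The partizan game equal to a natural number `n`. -/
def natPG : ℕ → PGame
  | 0 => 0
  | n + 1 => natPG n + 1

/-- The partizan game equal to an integer `z`. -/
def intPG (z : ℤ) : PGame := if 0 ≤ z then natPG z.toNat else -natPG (-z).toNat

/-- The game up, `↑ = {0 | *}`. -/
def up : PGame := PGame.mk PUnit PUnit (fun _ => 0) (fun _ => star)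

/-- The game down, `↓ = {* | 0}`. -/
def down : PGame := -up

/-- The sum of `n` copies of up. -/
def natUp : ℕ → PGame
  | 0 => 0
  | n + 1 => natUp n + up

/-- The game `z·↑`: `|z|` copies of up if `z ≥ 0`, and `|z|` copies of down otherwise. -/
def zUp (z : ℤ) : PGame := if 0 ≤ z then natUp z.toNat else -natUp (-z).toNat

/-- Two games have the same outcome: Left wins moving first in one iff in the other,
and Right wins moving first in one iff in the other. -/
def SameOutcome (A B : PGame) : Prop := (0 ⧏ A ↔ 0 ⧏ B) ∧ (A ⧏ 0 ↔ B ⧏ 0)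

/-- Far-star equivalence: `G + X + ✶` and `H + X + ✶` have the same outcome for
every game `X`, where `✶` (far star) is any nim-heap `*k` with `k ≥ 2`. -/
def FarStarEquiv (G H : PGame) : Prop :=
  ∀ (X : PGame) (k : ℕ), 2 ≤ k → SameOutcome (G + X + nim k) (H + X + nim k)

/-- `G` has atomic weight `z` if `G` is far-star equivalent to `z·↑`. -/
def AtomicWeight (G : PGame) (z : ℤ) : Prop := FarStarEquiv G (zUp z)

/-- A game is all-small if in every subposition Left has a move iff Right has a move. -/
def AllSmall : PGame → Prop
  | PGame.mk l r L R =>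
    (Nonempty l ↔ Nonempty r) ∧ (∀ i, AllSmall (L i)) ∧ (∀ j, AllSmall (R j))

end MixedDeletion

/-!
A position reached from a path is a linear forest; we encode it by the set `S` of indices `i`
of its edges `{i, i + 1}`, so that its components are the maximal intervals ("runs") of `S`.
Left deletes an inner vertex, which cuts two consecutive edges out of the interior of a run;
Right cuts out one interior edge. The outcome of a forest is that of a sum in which a run of
`r` edges contributes `0` for `r ≤ 2`, a negative number for `r = 3, 9` or `r ≥ 11`, `*` for
`r = 4`, `↓*` for `r = 5, 6, 10` and `↓` for `r = 7, 8`. Counting `↓*` as one `↓` and one `*`,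
Left wins moving first iff there is no negative term, at most one `↓` and an odd number of `*`,
and moving second iff there is no negative term, no `↓` and an even number of `*`. Both
predicates obey the recursion that defines `≤ 0` and `0 ≤` (moving first, Left wins iff some
move of hers leads to a position she wins moving second), so by strong induction on `S` they
describe the outcome. The path `P_n` is the single run `n - 1`, of negative or `↓` type for
`n ≥ 8`, `n ≠ 11`, so Left loses whoever starts.
-/

namespace SetTheory.PGame

theorem leLF_zero_snd_iff (x : PGame.{u}) :
    ((leLF x 0).2 ↔ ¬ 0 ≤ x) ∧ ((leLF 0 x).2 ↔ ¬ x ≤ 0) := by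
  induction x with
  | mk l r L R ihL ihR =>
    change ((leLF (mk l r L R) (mk PEmpty PEmpty PEmpty.elim PEmpty.elim)).2 ↔
        ¬ (leLF (mk PEmpty PEmpty PEmpty.elim PEmpty.elim) (mk l r L R)).1) ∧
      ((leLF (mk PEmpty PEmpty PEmpty.elim PEmpty.elim) (mk l r L R)).2 ↔
        ¬ (leLF (mk l r L R) (mk PEmpty PEmpty PEmpty.elim PEmpty.elim)).1)
    rw [leLF, leLF]
    simp only [IsEmpty.forall_iff, IsEmpty.exists_iff, true_and, and_true, or_false, false_or,
      not_forall]
    exact ⟨exists_congr fun j => ((not_congr (ihR j).2).trans not_not).symm,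
      exists_congr fun i => ((not_congr (ihL i).1).trans not_not).symm⟩

theorem mk_le_zero_iff {l r : Type u} {L : l → PGame.{u}} {R : r → PGame.{u}} :
    mk l r L R ≤ 0 ↔ ∀ i, ¬ 0 ≤ L i := by
  change (leLF (mk l r L R) (mk PEmpty PEmpty PEmpty.elim PEmpty.elim)).1 ↔ _
  rw [leLF]
  simp only [IsEmpty.forall_iff, and_true]
  exact forall_congr' fun i => (leLF_zero_snd_iff (L i)).1

theorem zero_le_mk_iff {l r : Type u} {L : l → PGame.{u}} {R : r → PGame.{u}} :
    0 ≤ mk l r L R ↔ ∀ j, ¬ R j ≤ 0 := by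
  change (leLF (mk PEmpty PEmpty PEmpty.elim PEmpty.elim) (mk l r L R)).1 ↔ _
  rw [leLF]
  simp only [IsEmpty.forall_iff, true_and]
  exact forall_congr' fun j => (leLF_zero_snd_iff (R j)).2

end SetTheory.PGame

namespace MixedDeletion

open Finset

section Runs

variable {S : Finset ℕ} {a b t u x y : ℕ}

theorem exists_add_notMem (S : Finset ℕ) (a : ℕ) : ∃ k, a + k ∉ S := by
  obtain ⟨n, hn⟩ := S.exists_nat_subset_range
  exact ⟨n, fun h => by simpa using hn h⟩

def runLength (S : Finset ℕ) (a : ℕ) : ℕ := Nat.find (exists_add_notMem S a)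

theorem runLength_eq_iff {L : ℕ} : runLength S a = L ↔ (∀ k < L, a + k ∈ S) ∧ a + L ∉ S := by
  rw [runLength, Nat.find_eq_iff, and_comm]
  simp

theorem lt_runLength_iff {m : ℕ} : m < runLength S a ↔ ∀ k ≤ m, a + k ∈ S := by
  rw [runLength, Nat.lt_find_iff]
  simp

theorem add_mem_of_lt_runLength {k : ℕ} (h : k < runLength S a) : a + k ∈ S :=
  lt_runLength_iff.1 h k le_rfl

def runStarts (S : Finset ℕ) : Finset ℕ := S.filter fun a => a = 0 ∨ a - 1 ∉ S

def runs (S : Finset ℕ) : Multiset ℕ := (runStarts S).val.map (runLength S)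

theorem mem_runStarts : a ∈ runStarts S ↔ a ∈ S ∧ (a = 0 ∨ a - 1 ∉ S) := mem_filter

theorem exists_runStart (hu : u ∈ S) : ∃ x ∈ runStarts S, x ≤ u ∧ u < x + runLength S x := by
  induction u using Nat.strong_induction_on with
  | _ u ih =>
    by_cases hstart : u = 0 ∨ u - 1 ∉ S
    · refine ⟨u, mem_runStarts.2 ⟨hu, hstart⟩, le_rfl, ?_⟩
      have : 0 < runLength S u := lt_runLength_iff.2 fun k hk => by simpa [Nat.le_zero.1 hk]
      omega
    · simp only [not_or, not_not] at hstart
      obtain ⟨x, hx, hxu, hlt⟩ := ih (u - 1) (by omega) hstart.2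
      refine ⟨x, hx, by omega, ?_⟩
      have : u - x < runLength S x := lt_runLength_iff.2 fun k hk => by
        rcases hk.lt_or_eq with hk | rfl
        · exact add_mem_of_lt_runLength (by omega)
        · rwa [Nat.add_sub_cancel' (by omega)]
      omega

theorem add_runLength_lt (hy : y ∈ runStarts S) (hxy : x < y) :
    x + runLength S x < y := by
  by_contra! h
  have hmem : x + (y - 1 - x) ∈ S := add_mem_of_lt_runLength (by omega)
  rw [show x + (y - 1 - x) = y - 1 by omega] at hmem
  rcases (mem_runStarts.1 hy).2 with h0 | hnot
  · omega
  · exact hnot hmem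

theorem mem_of_le_of_lt_add_runLength {w : ℕ} (h₁ : a ≤ w) (h₂ : w < a + runLength S a) :
    w ∈ S := by
  have := add_mem_of_lt_runLength (S := S) (a := a) (k := w - a) (by omega)
  rwa [Nat.add_sub_cancel' h₁] at this

theorem add_runLength_notMem (S : Finset ℕ) (a : ℕ) : a + runLength S a ∉ S :=
  Nat.find_spec (exists_add_notMem S a)

theorem runLength_add {k : ℕ} (h : k ≤ runLength S a) :
    runLength S (a + k) = runLength S a - k := by
  refine runLength_eq_iff.2 ⟨fun j hj => ?_, ?_⟩
  · rw [add_assoc]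
    exact add_mem_of_lt_runLength (by omega)
  · rw [add_assoc, Nat.add_sub_cancel' h]
    exact add_runLength_notMem S a

theorem runLength_sdiff_Ioc_of_disjoint {z : ℕ} (hz : z + runLength S z ≤ u + 1 ∨ u + t < z) :
    runLength (S \ Ioc u (u + t)) z = runLength S z :=
  runLength_eq_iff.2
    ⟨fun k hk => mem_sdiff.2 ⟨add_mem_of_lt_runLength hk, by rw [mem_Ioc]; omega⟩,
      fun h => add_runLength_notMem S z (mem_sdiff.1 h).1⟩

theorem runLength_sdiff_Ioc_self (ht : 0 < t) (hxu : x ≤ u) (hux : u < x + runLength S x) :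
    runLength (S \ Ioc u (u + t)) x = u + 1 - x :=
  runLength_eq_iff.2
    ⟨fun k hk => mem_sdiff.2 ⟨add_mem_of_lt_runLength (by omega), by rw [mem_Ioc]; omega⟩,
      fun h => (mem_sdiff.1 h).2 (by rw [mem_Ioc]; omega)⟩

theorem runStarts_sdiff_Ioc (ht : 0 < t) (h : Icc u (u + t + 1) ⊆ S) :
    runStarts (S \ Ioc u (u + t)) = insert (u + t + 1) (runStarts S) := by
  have hmem : ∀ w, u ≤ w → w ≤ u + t + 1 → w ∈ S := fun w h₁ h₂ => h (mem_Icc.2 ⟨h₁, h₂⟩)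
  ext z
  simp only [mem_insert, mem_runStarts, mem_sdiff, mem_Ioc]
  by_cases hz : u < z ∧ z ≤ u + t + 1
  · simp only [hmem z (by omega) hz.2, hmem (z - 1) (by omega) (by omega), true_and,
      not_true_eq_false, or_false]
    omega
  · have hz1 : ¬(u < z - 1 ∧ z - 1 ≤ u + t) := by omega
    simp only [hz1, and_true, not_false_eq_true]
    constructor
    · rintro ⟨⟨hzS, -⟩, h⟩
      exact Or.inr ⟨hzS, h⟩
    · rintro (h | ⟨hzS, h⟩)
      · omega
      · exact ⟨⟨hzS, by omega⟩, h⟩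

theorem runs_sdiff_Ioc (hx : x ∈ runStarts S) (ha : 0 < a) (hb : 0 < b) (ht : 0 < t)
    (hu : u + 1 = x + a) (hlen : runLength S x = a + t + b) :
    ∃ M₀, runs S = (a + t + b) ::ₘ M₀ ∧ runs (S \ Ioc u (u + t)) = a ::ₘ b ::ₘ M₀ := by
  have hblock : Icc u (u + t + 1) ⊆ S := fun w hw => by
    rw [mem_Icc] at hw
    exact mem_of_le_of_lt_add_runLength (a := x) (by omega) (by omega)
  have hnew : u + t + 1 ∉ runStarts S := fun h =>
    (mem_runStarts.1 h).2.elim (by omega) fun hn => hn (hblock (mem_Icc.2 ⟨by omega, by omega⟩))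
  obtain ⟨R, hR⟩ := Multiset.exists_cons_of_mem hx
  have hother : ∀ y ∈ R, runLength (S \ Ioc u (u + t)) y = runLength S y := by
    intro y hyR
    have hnodup := (runStarts S).nodup
    rw [hR, Multiset.nodup_cons] at hnodup
    have hy : y ∈ runStarts S := by rw [← mem_val, hR]; exact Multiset.mem_cons_of_mem hyR
    apply runLength_sdiff_Ioc_of_disjoint
    rcases Nat.lt_or_gt_of_ne (ne_of_mem_of_not_mem hyR hnodup.1) with h | h
    · have := add_runLength_lt hx h
      omega
    · have := add_runLength_lt hy h
      omega
  have hright : runLength (S \ Ioc u (u + t)) (u + t + 1) = b := by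
    rw [runLength_sdiff_Ioc_of_disjoint (Or.inr (by omega)), show u + t + 1 = x + (a + t) by omega,
      runLength_add (by omega)]
    omega
  have hleft : runLength (S \ Ioc u (u + t)) x = a := by
    rw [runLength_sdiff_Ioc_self ht (by omega) (by omega)]
    omega
  refine ⟨R.map (runLength S), ?_, ?_⟩
  · rw [runs, hR, Multiset.map_cons, hlen]
  · rw [runs, runStarts_sdiff_Ioc ht hblock, insert_val_of_notMem hnew, hR, Multiset.map_cons,
      Multiset.map_cons, hright, hleft, Multiset.cons_swap, Multiset.map_congr rfl hother]

def Split (t : ℕ) (M M' : Multiset ℕ) : Prop :=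
  ∃ M₀ a b, 0 < a ∧ 0 < b ∧ M = (a + t + b) ::ₘ M₀ ∧ M' = a ::ₘ b ::ₘ M₀

theorem split_runs_sdiff_Ioc (ht : 0 < t) (hblock : Icc u (u + t + 1) ⊆ S) :
    Split t (runs S) (runs (S \ Ioc u (u + t))) := by
  have hmem : ∀ w, u ≤ w → w ≤ u + t + 1 → w ∈ S := fun w h1 h2 => hblock (mem_Icc.2 ⟨h1, h2⟩)
  obtain ⟨x, hx, hxu, hux⟩ := exists_runStart (hmem u le_rfl (by omega))
  have hlong : u + t + 1 - x < runLength S x := lt_runLength_iff.2 fun k hk => by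
    rcases le_or_gt (x + k) u with h | h
    · exact add_mem_of_lt_runLength (by omega)
    · exact hmem _ (by omega) (by omega)
  obtain ⟨M₀, h₁, h₂⟩ := runs_sdiff_Ioc (u := u) (t := t) (a := u + 1 - x)
    (b := runLength S x - (u + t + 1 - x)) hx (by omega) (by omega) ht (by omega) (by omega)
  exact ⟨M₀, _, _, by omega, by omega, h₁, h₂⟩

theorem exists_block_of_split {M' : Multiset ℕ} (ht : 0 < t) (h : Split t (runs S) M') :
    ∃ u, Icc u (u + t + 1) ⊆ S ∧ runs (S \ Ioc u (u + t)) = M' := by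
  obtain ⟨M₀, a, b, ha, hb, hS, rfl⟩ := h
  obtain ⟨x, hx, hlen⟩ := Multiset.mem_map.1 (hS ▸ Multiset.mem_cons_self _ _)
  refine ⟨x + a - 1, fun w hw => ?_, ?_⟩
  · rw [mem_Icc] at hw
    exact mem_of_le_of_lt_add_runLength (a := x) (by omega) (by omega)
  · obtain ⟨M₁, h₁, h₂⟩ := runs_sdiff_Ioc (u := x + a - 1) hx ha hb ht (by omega) hlen
    rw [h₂, (Multiset.cons_inj_right _).1 (hS.symm.trans h₁)]

theorem forall_block_iff_forall_split (ht : 0 < t) (P : Multiset ℕ → Prop) :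
    (∀ u, Icc u (u + t + 1) ⊆ S → P (runs (S \ Ioc u (u + t)))) ↔
      ∀ M', Split t (runs S) M' → P M' := by
  refine ⟨fun h M' hM' => ?_, fun h u hu => h _ (split_runs_sdiff_Ioc ht hu)⟩
  obtain ⟨u, hu, rfl⟩ := exists_block_of_split ht hM'
  exact h u hu

end Runs

section Forest

variable {S : Finset ℕ} {u v : ℕ}

def forestVerts (S : Finset ℕ) : Finset ℕ := S.biUnion fun i => {i, i + 1}

def forestEdges (S : Finset ℕ) : Finset (Sym2 ℕ) := S.image fun i => s(i, i + 1)

def flForest (S : Finset ℕ) : PGame := flG (forestVerts S) (forestEdges S)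

theorem mem_forestVerts : v ∈ forestVerts S ↔ ∃ i ∈ S, v = i ∨ v = i + 1 := by
  simp [forestVerts]

theorem injective_sym2_mk_succ : Function.Injective fun i : ℕ => s(i, i + 1) := fun i j h => by
  simp only [Sym2.eq_iff] at h
  omega

theorem deg_forestEdges (S : Finset ℕ) (v : ℕ) :
    deg (forestEdges S) v = (S.filter fun i => v = i ∨ v = i + 1).card := by
  rw [deg, forestEdges, filter_image, card_image_of_injective _ injective_sym2_mk_succ]
  simp only [Sym2.mem_iff]

theorem deg_forestEdges_pos_iff : 0 < deg (forestEdges S) v ↔ v ∈ forestVerts S := by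
  simp [deg_forestEdges, card_pos, Finset.Nonempty, mem_forestVerts]

theorem noIsol_forestEdges_iff {V : Finset ℕ} : NoIsol V (forestEdges S) ↔ V ⊆ forestVerts S :=
  forall₂_congr fun _ _ => deg_forestEdges_pos_iff

theorem one_lt_deg_forestEdges_iff :
    1 < deg (forestEdges S) v ↔ v ∈ S ∧ 0 < v ∧ v - 1 ∈ S := by
  rw [deg_forestEdges, one_lt_card]
  constructor
  · rintro ⟨i, hi, j, hj, hij⟩
    obtain ⟨hiS, hvi⟩ := mem_filter.1 hi
    obtain ⟨hjS, hvj⟩ := mem_filter.1 hj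
    rcases (by omega : (v = i ∧ v = j + 1) ∨ (v = i + 1 ∧ v = j)) with ⟨h₁, h₂⟩ | ⟨h₁, h₂⟩
    · exact ⟨h₁ ▸ hiS, by omega, (show j = v - 1 by omega) ▸ hjS⟩
    · exact ⟨h₂ ▸ hjS, by omega, (show i = v - 1 by omega) ▸ hiS⟩
  · rintro ⟨hv, hpos, hv1⟩
    exact ⟨v, mem_filter.2 ⟨hv, Or.inl rfl⟩, v - 1, mem_filter.2 ⟨hv1, Or.inr (by omega)⟩,
      by omega⟩

theorem filter_notMem_forestEdges (S : Finset ℕ) (v : ℕ) :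
    (forestEdges S).filter (fun e => v ∉ e) =
      forestEdges (S.filter fun i => v ≠ i ∧ v ≠ i + 1) := by
  rw [forestEdges, forestEdges, filter_image]
  simp only [Sym2.mem_iff, not_or]

theorem erase_forestEdges (S : Finset ℕ) (i : ℕ) :
    (forestEdges S).erase s(i, i + 1) = forestEdges (S.erase i) :=
  (image_erase injective_sym2_mk_succ S i).symm

theorem filter_ne_eq_sdiff_Ioc (S : Finset ℕ) (u : ℕ) :
    S.filter (fun i => u + 2 ≠ i ∧ u + 2 ≠ i + 1) = S \ Ioc u (u + 2) := by
  ext i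
  simp only [mem_filter, mem_sdiff, mem_Ioc]
  exact and_congr_right fun _ => by omega

theorem forestVerts_sdiff_Ioc_two (h₀ : u ∈ S) (h₃ : u + 3 ∈ S) :
    forestVerts (S \ Ioc u (u + 2)) = (forestVerts S).erase (u + 2) := by
  ext w
  simp only [mem_erase, mem_forestVerts, mem_sdiff, mem_Ioc]
  constructor
  · rintro ⟨i, ⟨hi, hiu⟩, hw⟩
    exact ⟨by omega, i, hi, hw⟩
  · rintro ⟨hw2, i, hi, hw⟩
    by_cases hiu : u < i ∧ i ≤ u + 2
    · rcases (by omega : w = u + 1 ∨ w = u + 3) with rfl | rfl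
      · exact ⟨u, ⟨h₀, by omega⟩, Or.inr rfl⟩
      · exact ⟨u + 3, ⟨h₃, by omega⟩, Or.inl rfl⟩
    · exact ⟨i, ⟨hi, hiu⟩, hw⟩

theorem forestVerts_erase (h₀ : u ∈ S) (h₂ : u + 2 ∈ S) :
    forestVerts (S.erase (u + 1)) = forestVerts S := by
  ext w
  simp only [mem_forestVerts, mem_erase]
  constructor
  · rintro ⟨i, ⟨-, hi⟩, hw⟩
    exact ⟨i, hi, hw⟩
  · rintro ⟨i, hi, hw⟩
    by_cases hiu : i = u + 1
    · subst hiu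
      rcases hw with rfl | rfl
      · exact ⟨u, ⟨by omega, h₀⟩, Or.inr rfl⟩
      · exact ⟨u + 2, ⟨by omega, h₂⟩, Or.inl rfl⟩
    · exact ⟨i, ⟨hiu, hi⟩, hw⟩

theorem leftMove_forest_iff :
    (LeftOK (forestVerts S) (forestEdges S) v ∧ deg (forestEdges S) v ≠ 1) ↔
      ∃ u, v = u + 2 ∧ Icc u (u + 3) ⊆ S := by
  constructor
  · rintro ⟨⟨hv, hno⟩, hdeg⟩
    obtain ⟨hvS, hvpos, hv1S⟩ := (one_lt_deg_forestEdges_iff (S := S) (v := v)).1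
      (by have := deg_forestEdges_pos_iff.2 hv; omega)
    rw [filter_notMem_forestEdges, noIsol_forestEdges_iff] at hno
    obtain ⟨i, hi, hvi⟩ := mem_forestVerts.1
      (hno (mem_erase.2 ⟨by omega, mem_forestVerts.2 ⟨v, hvS, Or.inr rfl⟩⟩))
    obtain ⟨j, hj, hvj⟩ := mem_forestVerts.1
      (hno (mem_erase.2 ⟨by omega, mem_forestVerts.2 ⟨v - 1, hv1S, Or.inl rfl⟩⟩))
    obtain ⟨hiS, hiv⟩ := mem_filter.1 hi
    obtain ⟨hjS, hjv⟩ := mem_filter.1 hj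
    refine ⟨v - 2, by omega, fun w hw => ?_⟩
    rw [mem_Icc] at hw
    obtain rfl | rfl | rfl | rfl : w = j ∨ w = v - 1 ∨ w = v ∨ w = i := by omega
    exacts [hjS, hv1S, hvS, hiS]
  · rintro ⟨u, rfl, hu⟩
    have hmem : ∀ w, u ≤ w → w ≤ u + 3 → w ∈ S := fun w h₁ h₂ => hu (mem_Icc.2 ⟨h₁, h₂⟩)
    refine ⟨⟨mem_forestVerts.2 ⟨u + 2, hmem _ (by omega) (by omega), Or.inl rfl⟩, ?_⟩, ?_⟩
    · rw [filter_notMem_forestEdges, filter_ne_eq_sdiff_Ioc, noIsol_forestEdges_iff,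
        forestVerts_sdiff_Ioc_two (hmem u le_rfl (by omega)) (hmem _ (by omega) le_rfl)]
    · have := one_lt_deg_forestEdges_iff.2
        ⟨hmem (u + 2) (by omega) (by omega), by omega, hmem (u + 2 - 1) (by omega) (by omega)⟩
      omega

theorem rightMove_forest_iff {e : Sym2 ℕ} :
    RightOK (forestVerts S) (forestEdges S) e ↔ ∃ u, e = s(u + 1, u + 2) ∧ Icc u (u + 2) ⊆ S := by
  constructor
  · rintro ⟨he, hno⟩
    obtain ⟨i, hiS, rfl⟩ := mem_image.1 he
    rw [erase_forestEdges, noIsol_forestEdges_iff] at hno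
    obtain ⟨j, hj, hij⟩ := mem_forestVerts.1 (hno (mem_forestVerts.2 ⟨i, hiS, Or.inl rfl⟩))
    obtain ⟨k, hk, hik⟩ := mem_forestVerts.1 (hno (mem_forestVerts.2 ⟨i, hiS, Or.inr rfl⟩))
    obtain ⟨hji, hjS⟩ := mem_erase.1 hj
    obtain ⟨hki, hkS⟩ := mem_erase.1 hk
    obtain rfl : i = j + 1 := by omega
    refine ⟨j, rfl, fun w hw => ?_⟩
    rw [mem_Icc] at hw
    obtain rfl | rfl | rfl : w = j ∨ w = j + 1 ∨ w = k := by omega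
    exacts [hjS, hiS, hkS]
  · rintro ⟨u, rfl, hu⟩
    have hmem : ∀ w, u ≤ w → w ≤ u + 2 → w ∈ S := fun w h₁ h₂ => hu (mem_Icc.2 ⟨h₁, h₂⟩)
    refine ⟨mem_image.2 ⟨u + 1, hmem _ (by omega) (by omega), rfl⟩, ?_⟩
    change NoIsol _ ((forestEdges S).erase s(u + 1, u + 1 + 1))
    rw [erase_forestEdges, noIsol_forestEdges_iff,
      forestVerts_erase (hmem u le_rfl (by omega)) (hmem _ (by omega) le_rfl)]

theorem flForest_le_zero_iff :
    flForest S ≤ 0 ↔ ∀ u, Icc u (u + 3) ⊆ S → ¬ 0 ≤ flForest (S \ Ioc u (u + 2)) := by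
  have hpos : ∀ u, Icc u (u + 3) ⊆ S →
      flG ((forestVerts S).erase (u + 2)) ((forestEdges S).filter fun e => u + 2 ∉ e) =
        flForest (S \ Ioc u (u + 2)) := fun u hu => by
    rw [filter_notMem_forestEdges, filter_ne_eq_sdiff_Ioc, flForest,
      forestVerts_sdiff_Ioc_two (hu (mem_Icc.2 ⟨le_rfl, by omega⟩))
        (hu (mem_Icc.2 ⟨by omega, le_rfl⟩))]
  rw [flForest, flG, mk_le_zero_iff]
  constructor
  · intro h u hu
    rw [← hpos u hu]
    exact h ⟨u + 2, leftMove_forest_iff.2 ⟨u, rfl, hu⟩⟩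
  · rintro h ⟨v, hv⟩
    obtain ⟨u, rfl, hu⟩ := leftMove_forest_iff.1 hv
    rw [hpos u hu]
    exact h u hu

theorem zero_le_flForest_iff :
    0 ≤ flForest S ↔ ∀ u, Icc u (u + 2) ⊆ S → ¬ flForest (S \ Ioc u (u + 1)) ≤ 0 := by
  have hpos : ∀ u, Icc u (u + 2) ⊆ S →
      flG (forestVerts S) ((forestEdges S).erase s(u + 1, u + 2)) =
        flForest (S \ Ioc u (u + 1)) := fun u hu => by
    rw [flForest, Nat.Ioc_succ_singleton, sdiff_singleton_eq_erase,
      forestVerts_erase (hu (mem_Icc.2 ⟨le_rfl, by omega⟩)) (hu (mem_Icc.2 ⟨by omega, le_rfl⟩))]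
    exact congrArg _ (erase_forestEdges S (u + 1))
  rw [flForest, flG, zero_le_mk_iff]
  constructor
  · intro h u hu
    rw [← hpos u hu]
    exact h ⟨s(u + 1, u + 2), rightMove_forest_iff.2 ⟨u, rfl, hu⟩⟩
  · rintro h ⟨e, he⟩
    obtain ⟨u, rfl, hu⟩ := rightMove_forest_iff.1 he
    rw [hpos u hu]
    exact h u hu

end Forest

section Weights

def negWeight (r : ℕ) : ℕ := if r = 3 ∨ r = 9 ∨ 11 ≤ r then 1 else 0

def downWeight (r : ℕ) : ℕ := if 5 ≤ r ∧ r ≤ 8 ∨ r = 10 then 1 else 0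

def starWeight (r : ℕ) : ℕ := if 4 ≤ r ∧ r ≤ 6 ∨ r = 10 then 1 else 0

theorem weight_cases (r : ℕ) :
    r ≤ 2 ∧ negWeight r = 0 ∧ downWeight r = 0 ∧ starWeight r = 0 ∨
    r = 3 ∧ negWeight r = 1 ∧ downWeight r = 0 ∧ starWeight r = 0 ∨
    r = 4 ∧ negWeight r = 0 ∧ downWeight r = 0 ∧ starWeight r = 1 ∨
    (r = 5 ∨ r = 6 ∨ r = 10) ∧ negWeight r = 0 ∧ downWeight r = 1 ∧ starWeight r = 1 ∨
    (r = 7 ∨ r = 8) ∧ negWeight r = 0 ∧ downWeight r = 1 ∧ starWeight r = 0 ∨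
    (r = 9 ∨ 11 ≤ r) ∧ negWeight r = 1 ∧ downWeight r = 0 ∧ starWeight r = 0 := by
  unfold negWeight downWeight starWeight
  split_ifs <;> omega

def LeftWinsFirst (M : Multiset ℕ) : Prop :=
  (M.map negWeight).sum = 0 ∧ (M.map downWeight).sum ≤ 1 ∧ (M.map starWeight).sum % 2 = 1

def LeftWinsSecond (M : Multiset ℕ) : Prop :=
  (M.map negWeight).sum = 0 ∧ (M.map downWeight).sum = 0 ∧ (M.map starWeight).sum % 2 = 0

theorem exists_cons_of_sum_map_ne_zero {M : Multiset ℕ} {f : ℕ → ℕ} (h : (M.map f).sum ≠ 0) :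
    ∃ r M₀, M = r ::ₘ M₀ ∧ f r ≠ 0 := by
  obtain ⟨r, hr, hfr⟩ : ∃ r ∈ M, f r ≠ 0 := by
    by_contra! hc
    exact h (Multiset.sum_eq_zero (by simpa using hc))
  obtain ⟨M₀, rfl⟩ := Multiset.exists_cons_of_mem hr
  exact ⟨r, M₀, rfl, hfr⟩

theorem exists_split_one_not_leftWinsFirst {M : Multiset ℕ} (h : ¬ LeftWinsSecond M) :
    ∃ M', Split 1 M M' ∧ ¬ LeftWinsFirst M' := by
  obtain ⟨r, M₀, rfl, hr⟩ : ∃ r M₀, M = r ::ₘ M₀ ∧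
      (r = 3 ∧ (M.map starWeight).sum % 2 = 0 ∨ r = 4 ∧ (M.map starWeight).sum % 2 = 1 ∨
        5 ≤ r) := by
    unfold LeftWinsSecond at h
    by_cases hstar : (M.map starWeight).sum % 2 = 1
    · obtain ⟨r, M₀, rfl, hr⟩ :=
        exists_cons_of_sum_map_ne_zero (M := M) (f := starWeight) (by omega)
      have := weight_cases r
      exact ⟨r, M₀, rfl, by omega⟩
    by_cases hneg : (M.map negWeight).sum = 0
    · obtain ⟨r, M₀, rfl, hr⟩ :=
        exists_cons_of_sum_map_ne_zero (M := M) (f := downWeight) (by omega)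
      have := weight_cases r
      exact ⟨r, M₀, rfl, by omega⟩
    · obtain ⟨r, M₀, rfl, hr⟩ := exists_cons_of_sum_map_ne_zero hneg
      have := weight_cases r
      exact ⟨r, M₀, rfl, by omega⟩
  -- Right cuts a run of `r ≥ 5` edges into `3 + 1 + (r - 4)`, creating a negative term; a run of
  -- three or four edges he cuts into runs of at most two edges, which leaves an even number of `*`.
  obtain ⟨a, ha⟩ : ∃ a, a = 1 ∧ r ≤ 4 ∨ a = 3 ∧ 5 ≤ r :=
    if hr4 : r ≤ 4 then ⟨1, Or.inl ⟨rfl, hr4⟩⟩ else ⟨3, Or.inr ⟨rfl, by omega⟩⟩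
  refine ⟨a ::ₘ (r - 1 - a) ::ₘ M₀,
    ⟨M₀, a, r - 1 - a, by omega, by omega, by rw [show a + 1 + (r - 1 - a) = r by omega], rfl⟩, ?_⟩
  simp only [LeftWinsFirst, Multiset.map_cons, Multiset.sum_cons] at hr ⊢
  have := weight_cases a; have := weight_cases (r - 1 - a); have := weight_cases r
  omega

theorem exists_split_two_leftWinsSecond {M : Multiset ℕ} (h : LeftWinsFirst M) :
    ∃ M', Split 2 M M' ∧ LeftWinsSecond M' := by
  unfold LeftWinsFirst at h
  -- Left cuts the `↓`-type run if there is one, and otherwise a run of four edges (a `*`).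
  obtain ⟨r, M₀, rfl, hr⟩ : ∃ r M₀, M = r ::ₘ M₀ ∧
      (downWeight r = 1 ∨ r = 4) ∧ (M₀.map downWeight).sum = 0 := by
    by_cases hdown : (M.map downWeight).sum = 0
    · obtain ⟨r, M₀, rfl, hr⟩ :=
        exists_cons_of_sum_map_ne_zero (M := M) (f := starWeight) (by omega)
      simp only [Multiset.map_cons, Multiset.sum_cons] at hdown
      have := weight_cases r
      exact ⟨r, M₀, rfl, by omega⟩
    · obtain ⟨r, M₀, rfl, hr⟩ := exists_cons_of_sum_map_ne_zero hdown
      simp only [Multiset.map_cons, Multiset.sum_cons] at h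
      have := weight_cases r
      exact ⟨r, M₀, rfl, by omega⟩
  simp only [Multiset.map_cons, Multiset.sum_cons] at h
  have := weight_cases r
  obtain rfl | rfl | rfl | rfl | rfl | rfl : r = 1 + 2 + 1 ∨ r = 1 + 2 + 2 ∨ r = 2 + 2 + 2 ∨
      r = 1 + 2 + 4 ∨ r = 2 + 2 + 4 ∨ r = 4 + 2 + 4 := by omega
  all_goals
    refine ⟨_, ⟨M₀, _, _, by norm_num, by norm_num, rfl, rfl⟩, ?_⟩
    simp only [LeftWinsSecond, Multiset.map_cons, Multiset.sum_cons]
    norm_num [negWeight, downWeight, starWeight] at h hr ⊢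
    omega

theorem leftWinsSecond_iff {M : Multiset ℕ} :
    LeftWinsSecond M ↔ ∀ M', Split 1 M M' → LeftWinsFirst M' := by
  constructor
  · rintro h M' ⟨M₀, a, b, ha, hb, rfl, rfl⟩
    simp only [LeftWinsSecond, LeftWinsFirst, Multiset.map_cons, Multiset.sum_cons] at h ⊢
    have := weight_cases a; have := weight_cases b; have := weight_cases (a + 1 + b)
    omega
  · intro h
    by_contra hM
    obtain ⟨M', hsplit, hM'⟩ := exists_split_one_not_leftWinsFirst hM
    exact hM' (h M' hsplit)

theorem leftWinsFirst_iff {M : Multiset ℕ} :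
    LeftWinsFirst M ↔ ∃ M', Split 2 M M' ∧ LeftWinsSecond M' := by
  refine ⟨exists_split_two_leftWinsSecond, ?_⟩
  rintro ⟨M', ⟨M₀, a, b, ha, hb, rfl, rfl⟩, h⟩
  simp only [LeftWinsSecond, LeftWinsFirst, Multiset.map_cons, Multiset.sum_cons] at h ⊢
  have := weight_cases a; have := weight_cases b; have := weight_cases (a + 2 + b)
  omega

end Weights

theorem flForest_outcome (S : Finset ℕ) :
    (flForest S ≤ 0 ↔ ¬ LeftWinsFirst (runs S)) ∧ (0 ≤ flForest S ↔ LeftWinsSecond (runs S)) := by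
  induction S using Finset.strongInduction with
  | _ S ih =>
    have ih' : ∀ u t, 0 < t → Icc u (u + t + 1) ⊆ S →
        (flForest (S \ Ioc u (u + t)) ≤ 0 ↔ ¬ LeftWinsFirst (runs (S \ Ioc u (u + t)))) ∧
        (0 ≤ flForest (S \ Ioc u (u + t)) ↔ LeftWinsSecond (runs (S \ Ioc u (u + t)))) :=
      fun u t ht hu => ih _ ((ssubset_iff_of_subset sdiff_subset).2
        ⟨u + 1, hu (mem_Icc.2 ⟨by omega, by omega⟩), fun h => (mem_sdiff.1 h).2
          (mem_Ioc.2 ⟨by omega, by omega⟩)⟩)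
    constructor
    · rw [flForest_le_zero_iff, leftWinsFirst_iff, not_exists]
      simp only [not_and]
      rw [← forall_block_iff_forall_split two_pos]
      exact forall₂_congr fun u hu => not_congr (ih' u 2 two_pos hu).2
    · rw [zero_le_flForest_iff, leftWinsSecond_iff, ← forall_block_iff_forall_split one_pos]
      exact forall₂_congr fun u hu => (not_congr (ih' u 1 one_pos hu).1).trans not_not

theorem forestVerts_range {m : ℕ} (hm : 0 < m) : forestVerts (range m) = range (m + 1) := by
  ext v
  simp only [mem_forestVerts, mem_range]
  constructor
  · rintro ⟨i, hi, rfl | rfl⟩ <;> omega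
  · intro hv
    exact if h : v < m then ⟨v, h, Or.inl rfl⟩ else ⟨v - 1, by omega, Or.inr (by omega)⟩

theorem runs_range {m : ℕ} (hm : 0 < m) : runs (range m) = {m} := by
  have hstarts : runStarts (range m) = {0} := by
    ext a
    simp only [mem_runStarts, mem_range, mem_singleton]
    omega
  have hlen : runLength (range m) 0 = m := runLength_eq_iff.2 ⟨fun k hk => by simpa, by simp⟩
  rw [runs, hstarts, singleton_val, Multiset.map_singleton, hlen]

/-- For every `n ≥ 8` with `n ≠ 11`, Right wins the Forbidden Leaf Variant on the
path `P_n` regardless of which player moves first, i.e. `P_n < 0`. -/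
theorem fl_path_right_wins : ∀ n : ℕ, 8 ≤ n → n ≠ 11 → flPath n < 0 := by
  intro n h8 h11
  have hpath : flPath n = flForest (range (n - 1)) := by
    rw [flForest, forestVerts_range (by omega), Nat.sub_add_cancel (by omega)]
    rfl
  obtain ⟨hle, hge⟩ := flForest_outcome (range (n - 1))
  rw [runs_range (by omega)] at hle hge
  simp only [LeftWinsFirst, LeftWinsSecond, Multiset.map_singleton, Multiset.sum_singleton]
    at hle hge
  have := weight_cases (n - 1)
  rw [hpath]
  exact ⟨hle.2 (by omega), fun h => by have := hge.1 h; omega⟩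

end MixedDeletion
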